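/- arXiv:1810.01972 — 6 statements merged into one kernel-verified Lean document; each statement's English description precedes it below -/
import Mathlib

section
/- If G is a minimally 2-connected simple graph (i.e., G is 2-connected and for every edge e, G - e is not 2-connected), then G has a vertex of degree 2. -/
/-!
A longest path `p` starting at a vertex `a` contains every neighbour of `a`. If all degrees were
at least `3`, let `d` be the neighbour of `a` farthest along `p`: the segment of `p` from `a` to
`d` closed by the edge `da` is a cycle through all neighbours of `a`, so it has a chord `ac`.
Deleting a chord of a cycle keeps a `2`-connected graph `2`-connected: the two arcs of the
cycle between `a` and `c` avoid `ac` and meet only at `a` and `c`, so whichever vertex `x` is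
removed, one of them still joins `a` to `c` in `G - x`. This contradicts minimality, and
`2`-connectivity already forces every degree to be at least `2`.
-/

namespace SimpleGraph

variable {V : Type*}

/-- A simple graph is `2`-connected if it has at least `3` vertices and
deleting any single vertex leaves a connected graph. -/
def TwoConnected [Fintype V] (G : SimpleGraph V) : Prop :=
  3 ≤ Fintype.card V ∧ ∀ x : V, (G.induce {y | y ≠ x}).Connected

/-- A simple graph is minimally `2`-connected if it is `2`-connected and the deletion of
any edge yields a graph that is not `2`-connected. -/
def MinimallyTwoConnected [Fintype V] (G : SimpleGraph V) : Prop :=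
  G.TwoConnected ∧ ∀ e ∈ G.edgeSet, ¬ (G.deleteEdges {e}).TwoConnected

/-- Two `u`–`v` walks are internally disjoint if they share no vertex besides `u` and `v`
and share no edge. -/
def IntDisjoint (G : SimpleGraph V) {u v : V} (p q : G.Walk u v) : Prop :=
  (∀ w ∈ p.support, w ∈ q.support → w = u ∨ w = v) ∧ ∀ e ∈ p.edges, e ∉ q.edges

/-- `κ_G(u,v)`: the maximum number of pairwise internally disjoint `u`–`v` paths in `G`. -/
noncomputable def kappa (G : SimpleGraph V) (u v : V) : ℕ :=
  sSup {k | ∃ p : Fin k → G.Walk u v, (∀ i, (p i).IsPath) ∧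
    ∀ i j, i ≠ j → G.IntDisjoint (p i) (p j)}

/-- The average connectivity of `G`: the average of `κ_G(u,v)` over all unordered pairs of
distinct vertices (computed here as the sum over ordered pairs divided by `n(n-1)`). -/
noncomputable def avgKappa [Fintype V] [DecidableEq V] (G : SimpleGraph V) : ℚ :=
  (∑ p ∈ Finset.univ.offDiag, (G.kappa p.1 p.2 : ℚ)) /
    ((Fintype.card V : ℚ) * ((Fintype.card V : ℚ) - 1))

variable {G : SimpleGraph V}

namespace Walk

lemma IsCycle.eq_or_eq_of_mem_takeUntil_of_mem_dropUntil [DecidableEq V] {a c x : V}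
    {C : G.Walk a a} (hC : C.IsCycle) (hc : c ∈ C.support)
    (hxA : x ∈ (C.takeUntil c hc).support) (hxB : x ∈ (C.dropUntil c hc).support) : x = a ∨ x = c := by
  have hnodup : ((C.takeUntil c hc).support.tail ++ (C.dropUntil c hc).support.tail).Nodup := by
    have := hC.support_nodup
    rwa [← take_spec C hc, support_append, ← cons_tail_support (C.takeUntil c hc)] at this
  rw [mem_support_iff] at hxA hxB
  by_contra! hx
  exact List.disjoint_of_nodup_append hnodup (hxA.resolve_left hx.1) (hxB.resolve_left hx.2)

lemma reachable_induce_deleteEdges {a b x : V} {e : Sym2 V} (p : G.Walk a b)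
    (he : e ∉ p.edges) (hx : x ∉ p.support) :
    ((G.deleteEdges {e}).induce {y | y ≠ x}).Reachable
      ⟨a, ne_of_mem_of_not_mem p.start_mem_support hx⟩
      ⟨b, ne_of_mem_of_not_mem p.end_mem_support hx⟩ :=
  ⟨(p.toDeleteEdges {e} fun _ he' h => he (Set.mem_singleton_iff.mp h ▸ he')).induce _
    fun y hy (h : y = x) => hx (h ▸ by simpa using hy)⟩

lemma IsPath.exists_isCycle_isChord {a b : V} {p : G.Walk a b} (hp : p.IsPath)
    [Fintype (G.neighborSet a)] (hdeg : 3 ≤ G.degree a)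
    (hN : ∀ c, G.Adj a c → c ∈ p.support) :
    ∃ (C : G.Walk a a) (e : Sym2 V), C.IsCycle ∧ C.IsChord e := by
  classical
  -- `p.getVert j` is the neighbour of `a` farthest along `p`
  set j := Nat.findGreatest (fun m => G.Adj a (p.getVert m)) p.length
  set q := p.take j
  have hq : q.IsPath := hp.take j
  have hNq : ∀ c, G.Adj a c → c ∈ q.support := by
    intro c hac
    obtain ⟨m, rfl, hm⟩ := mem_support_iff_exists_getVert.mp (hN c hac)
    have hmj : m ≤ j := Nat.le_findGreatest hm hac
    simpa [q, Nat.min_eq_right hmj] using q.getVert_mem_support m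
  have had : G.Adj a (p.getVert j) := by
    obtain ⟨c, hac⟩ := (G.degree_pos_iff_exists_adj a).mp (by omega)
    obtain ⟨m, rfl, hm⟩ := mem_support_iff_exists_getVert.mp (hN c hac)
    exact Nat.findGreatest_spec (P := fun m => G.Adj a (p.getVert m)) hm hac
  -- the cycle `cons had q.reverse` meets `a` only in its edges to `p.getVert j` and `q.snd`
  obtain ⟨c, hac, hcd, hcs⟩ : ∃ c, G.Adj a c ∧ c ≠ p.getVert j ∧ c ≠ q.snd := by
    obtain ⟨c, hc, hcn⟩ := Finset.exists_mem_notMem_of_card_lt_card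
      (s := {p.getVert j, q.snd}) (t := G.neighborFinset a)
      ((Finset.card_le_two).trans_lt (by simpa using Nat.lt_of_succ_le hdeg))
    exact ⟨c, (G.mem_neighborFinset a c).mp hc, by simpa [not_or] using hcn⟩
  have hlen : 2 ≤ q.length := by
    obtain ⟨m, rfl, hm⟩ := mem_support_iff_exists_getVert.mp (hNq c hac)
    by_contra! hshort
    have : m < 2 := by omega
    interval_cases m
    · exact hac.ne (q.getVert_zero).symm
    · exact hcs rfl
  refine ⟨cons had q.reverse, s(a, c), ?_, ?_⟩
  · refine (cons_isCycle_iff _ _).mpr ⟨hq.reverse, fun h => ?_⟩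
    rw [edges_reverse, List.mem_reverse] at h
    have := hq.getVert_injOn (by simp; omega) (le_refl q.length)
      ((hq.eq_snd_of_mem_edges h).symm.trans q.getVert_length.symm)
    omega
  · refine isChord_sym2Mk.mpr ⟨hac, ?_, by simp, by simp [hNq c hac]⟩
    rw [edges_cons, List.mem_cons, edges_reverse, List.mem_reverse, not_or]
    exact ⟨fun h => hcd (Sym2.congr_right.mp h), fun h => hcs (hq.eq_snd_of_mem_edges h)⟩

end Walk

lemma Connected.of_forall_adj_reachable {H K : SimpleGraph V} (hH : H.Connected)
    (h : ∀ ⦃u w⦄, H.Adj u w → K.Reachable u w) : K.Connected :=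
  have := hH.nonempty
  ⟨fun u w => by
    simp only [reachable_eq_reflTransGen] at h ⊢
    exact Relation.reflTransGen_closed h _ _ (reachable_eq_reflTransGen ▸ hH.preconnected u w)⟩

lemma exists_isCycle_isChord_of_forall_three_le_degree [Fintype V] [DecidableRel G.Adj]
    [Nonempty V] (h : ∀ v, 3 ≤ G.degree v) :
    ∃ (v : V) (C : G.Walk v v) (e : Sym2 V), C.IsCycle ∧ C.IsChord e := by
  obtain ⟨a, b, p, hp, hmax⟩ := Walk.exists_isPath_forall_isPath_length_le_length G
  refine ⟨a, hp.exists_isCycle_isChord (h a) fun c hac => ?_⟩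
  by_contra hc
  have := hmax _ _ (Walk.cons hac.symm p) (hp.cons hc)
  simp at this

section TwoConnected

variable [Fintype V]

lemma TwoConnected.deleteEdges_of_forall_reachable (hG : G.TwoConnected) {a b : V}
    (h : ∀ x (ha : a ≠ x) (hb : b ≠ x),
      ((G.deleteEdges {s(a, b)}).induce {y | y ≠ x}).Reachable ⟨a, ha⟩ ⟨b, hb⟩) :
    (G.deleteEdges {s(a, b)}).TwoConnected := by
  refine ⟨hG.1, fun x => (hG.2 x).of_forall_adj_reachable ?_⟩
  rintro ⟨u, hu⟩ ⟨w, hw⟩ huw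
  by_cases he : s(u, w) = s(a, b)
  · rcases Sym2.eq_iff.mp he with ⟨rfl, rfl⟩ | ⟨rfl, rfl⟩
    · exact h x hu hw
    · exact (h x hw hu).symm
  · exact Adj.reachable (by simpa [he] using huw)

lemma TwoConnected.deleteEdges_of_isChord (hG : G.TwoConnected) {v : V}
    {C : G.Walk v v} (hC : C.IsCycle) {e : Sym2 V} (he : C.IsChord e) :
    (G.deleteEdges {e}).TwoConnected := by
  classical
  induction e using Sym2.ind with | h a c => ?_
  obtain ⟨-, hnot, ha, hc⟩ := Walk.isChord_sym2Mk.mp he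
  set D := C.rotate a ha
  have hD : D.IsCycle := hC.rotate ha
  have hcD : c ∈ D.support := (C.mem_support_rotate_iff a ha).mpr hc
  have hnotD : s(a, c) ∉ D.edges := fun h => hnot ((C.rotate_edges a ha).mem_iff.mp h)
  refine hG.deleteEdges_of_forall_reachable fun x hax hcx => ?_
  by_cases hxA : x ∈ (D.takeUntil c hcD).support
  · have hxB : x ∉ (D.dropUntil c hcD).support := fun hxB => by
      rcases hD.eq_or_eq_of_mem_takeUntil_of_mem_dropUntil hcD hxA hxB with rfl | rfl <;> simp_all
    exact ((D.dropUntil c hcD).reachable_induce_deleteEdges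
      (fun h => hnotD (D.edges_dropUntil_subset_edges hcD h)) hxB).symm
  · exact (D.takeUntil c hcD).reachable_induce_deleteEdges
      (fun h => hnotD (D.edges_takeUntil_subset_edges hcD h)) hxA

lemma TwoConnected.exists_adj_ne (hG : G.TwoConnected) {v x : V} (hvx : v ≠ x) :
    ∃ u, G.Adj v u ∧ u ≠ x := by
  classical
  have : Nontrivial {y | y ≠ x} := by
    rw [← Fintype.one_lt_card_iff_nontrivial, Set.card_ne_eq]
    have := hG.1
    omega
  obtain ⟨u, hu⟩ := (hG.2 x).preconnected.exists_adj_of_nontrivial ⟨v, hvx⟩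
  exact ⟨u, hu, u.2⟩

lemma TwoConnected.two_le_degree [DecidableRel G.Adj] (hG : G.TwoConnected) (v : V) :
    2 ≤ G.degree v := by
  have : Nontrivial V := Fintype.one_lt_card_iff_nontrivial.mp (by have := hG.1; omega)
  obtain ⟨x, hx⟩ := exists_ne v
  obtain ⟨u, hvu, -⟩ := hG.exists_adj_ne hx.symm
  obtain ⟨w, hvw, hwu⟩ := hG.exists_adj_ne hvu.ne
  rw [← card_neighborFinset_eq_degree]
  exact Finset.one_lt_card.mpr ⟨w, by simpa, u, by simpa, hwu⟩

end TwoConnected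

end SimpleGraph

theorem stmt_0_general {V : Type*} [Fintype V] (G : SimpleGraph V)
    [DecidableRel G.Adj] (h : G.MinimallyTwoConnected) :
    ∃ v : V, G.degree v = 2 := by
  by_contra! hdeg
  have : Nonempty V := Fintype.card_pos_iff.mp (by have := h.1.1; omega)
  have h3 : ∀ v, 3 ≤ G.degree v := fun v => by
    have := h.1.two_le_degree v
    have := hdeg v
    omega
  obtain ⟨_, C, e, hC, he⟩ := G.exists_isCycle_isChord_of_forall_three_le_degree h3
  exact h.2 e he.1 (h.1.deleteEdges_of_isChord hC he)

/-- If `G` is a minimally `2`-connected simple graph, then `G` has a vertex of degree `2`. -/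
theorem stmt_0 {V : Type*} [Fintype V] [DecidableEq V] (G : SimpleGraph V)
    [DecidableRel G.Adj] (h : G.MinimallyTwoConnected) :
    ∃ v : V, G.degree v = 2 :=
  stmt_0_general G h
end

section
/- A 2-connected simple graph G is minimally 2-connected if and only if no cycle of G has a chord. -/
/-!
If a cycle `C` has a chord `xy`, then for every vertex `z` one of the two arcs of `C` between
`x` and `y` avoids `z`, and it replaces the edge `xy` in `G - z`; hence `G - xy` is still
2-connected. Conversely, if `G - xy` is 2-connected then `x` and `y` lie on a common cycle of
`G - xy`, and `xy` is a chord of it. That any two vertices `u, v` of a 2-connected graph lie on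
a common cycle is shown by induction along a `u`–`v` walk: if `u'` is the next vertex and `C`
is a cycle through `u'` and `v` missing `u`, a path from `u` to `C` avoiding `u'`, together
with the edge `uu'` and the arc of `C` through `v`, gives the required cycle.
-/

namespace SimpleGraph

variable {V : Type*} {G H : SimpleGraph V}

lemma Connected.of_forall_adj_reachable_s1 (hG : G.Connected)
    (h : ∀ ⦃a b : V⦄, G.Adj a b → H.Reachable a b) : H.Connected := by
  have := hG.nonempty
  refine ⟨fun a b => ?_⟩
  obtain ⟨p⟩ := hG.preconnected a b
  induction p with
  | nil => rfl
  | cons hadj _ ih => exact (h hadj).trans ih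

namespace Walk

lemma exists_eq_append_first_mem (S : Set V) {a b : V} (p : G.Walk a b) (hb : b ∈ S) :
    ∃ z ∈ S, ∃ (q : G.Walk a z) (r : G.Walk z b), p = q.append r ∧
      ∀ x ∈ q.support, x ∈ S → x = z := by
  induction p with
  | nil => exact ⟨_, hb, nil, nil, rfl, by simp⟩
  | @cons a _ _ hadj p ih =>
    by_cases ha : a ∈ S
    · exact ⟨a, ha, nil, cons hadj p, rfl, by simp⟩
    · obtain ⟨z, hz, q, r, rfl, hfirst⟩ := ih hb
      refine ⟨z, hz, cons hadj q, r, rfl, ?_⟩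
      simp only [support_cons, List.mem_cons, forall_eq_or_imp]
      exact ⟨fun h => absurd h ha, hfirst⟩

variable {u : V} {c : G.Walk u u}

lemma IsCycle.exists_walk_notMem_support (hc : c.IsCycle) {x y z : V} (hx : x ∈ c.support)
    (hy : y ∈ c.support) (hzx : z ≠ x) (hzy : z ≠ y) :
    ∃ p : G.Walk x y, p.edges ⊆ c.edges ∧ z ∉ p.support := by
  classical
  set c' := c.rotate x hx
  have hy' : y ∈ c'.support := (c.mem_support_rotate_iff x hx).mpr hy
  have hc' : c'.edges ⊆ c.edges := (c.rotate_edges x hx).perm.subset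
  by_cases hz : z ∈ (c'.takeUntil y hy').support
  · refine ⟨(c'.dropUntil y hy').reverse, ?_, ?_⟩
    · rw [edges_reverse]
      exact fun e he => hc' (c'.edges_dropUntil_subset_edges hy' (List.mem_reverse.mp he))
    · rw [support_reverse, List.mem_reverse]
      intro hz'
      have hnd : c'.support.tail.Nodup := (hc.rotate hx).support_nodup
      rw [← c'.take_spec hy', tail_support_append] at hnd
      exact List.disjoint_of_nodup_append hnd (((mem_support_iff _).mp hz).resolve_left hzx)
        (((mem_support_iff _).mp hz').resolve_left hzy)
  · exact ⟨c'.takeUntil y hy', fun e he => hc' (c'.edges_takeUntil_subset_edges hy' he), hz⟩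

lemma IsCycle.exists_isPath_mem_support (hc : c.IsCycle) {z v : V} (hz : z ∈ c.support)
    (hzu : z ≠ u) (hv : v ∈ c.support) :
    ∃ p : G.Walk z u, p.IsPath ∧ p.support ⊆ c.support ∧ v ∈ p.support := by
  classical
  have hv' := hv
  rw [← c.take_spec hz, mem_support_append_iff] at hv'
  rcases hv' with hv' | hv'
  · refine ⟨(c.takeUntil z hz).reverse, (hc.isPath_takeUntil hz).reverse, ?_, ?_⟩
    · simpa using c.support_takeUntil_subset_support hz
    · simpa using hv'
  · have hc' := hc
    rw [← c.take_spec hz] at hc'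
    exact ⟨c.dropUntil z hz, hc'.isPath_of_append_right (not_nil_of_ne hzu.symm),
      c.support_dropUntil_subset_support hz, hv'⟩

lemma IsCycle.exists_isCycle_mem_support_of_adj (hc : c.IsCycle) {v w : V}
    (hv : v ∈ c.support) (hw : w ∉ c.support) (hadj : G.Adj u w) (q : G.Walk w v)
    (huq : u ∉ q.support) :
    ∃ (b : V) (c' : G.Walk b b), c'.IsCycle ∧ w ∈ c'.support ∧ v ∈ c'.support := by
  classical
  obtain ⟨z, hzc, r, r', hqr, hfirst⟩ :=
    q.bypass.exists_eq_append_first_mem {x | x ∈ c.support} hv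
  have hr : r.IsPath := (hqr ▸ q.bypass_isPath).of_append_left
  have hur : u ∉ r.support := fun h =>
    huq (q.support_bypass_subset_support (hqr ▸ r.support_subset_support_append_left _ h))
  have hzu : z ≠ u := by rintro rfl; exact hur r.end_mem_support
  have hwz : w ≠ z := by rintro rfl; exact hw hzc
  obtain ⟨p, hp, hpc, hvp⟩ := hc.exists_isPath_mem_support hzc hzu hv
  -- the ear `u - w ~r~ z` closed up by the arc `p` of `c` through `v`
  refine ⟨u, (cons hadj r).append p, ?_, by simp, (mem_support_append_iff _ _).mpr (.inr hvp)⟩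
  refine (hr.cons hur).isCycle_append hp ?_ (.inl ?_)
  · intro x hxr hxp
    obtain rfl := hfirst x hxr (hpc (List.mem_of_mem_tail hxp))
    exact (List.nodup_cons.mp (p.cons_tail_support ▸ hp.support_nodup)).1 hxp
  · have := not_nil_iff_lt_length.mp (not_nil_of_ne (p := r) hwz)
    rw [length_cons]
    omega

end Walk

open Walk

namespace TwoConnected

variable [Fintype V]

lemma exists_ne_ne (h : G.TwoConnected) (a b : V) : ∃ z, z ≠ a ∧ z ≠ b :=
  ENat.exists_ne_ne_of_three_le (by simpa [ENat.card_eq_coe_fintype_card] using h.1) a b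

lemma exists_walk_notMem_support (h : G.TwoConnected) {a b x : V} (ha : a ≠ x)
    (hb : b ≠ x) :
    ∃ p : G.Walk a b, x ∉ p.support := by
  obtain ⟨p⟩ := (h.2 x).preconnected ⟨a, ha⟩ ⟨b, hb⟩
  let q := p.map (Embedding.induce _).toHom
  have hq : x ∉ q.support := by
    rw [Walk.support_map, List.mem_map]
    rintro ⟨t, -, ht⟩
    exact t.2 ht
  exact ⟨q, hq⟩

lemma preconnected (h : G.TwoConnected) : G.Preconnected := fun a b => by
  obtain ⟨z, hza, hzb⟩ := h.exists_ne_ne a b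
  obtain ⟨p, -⟩ := h.exists_walk_notMem_support hza.symm hzb.symm
  exact p.reachable

lemma reachable_deleteEdges (h : G.TwoConnected) (u v : V) :
    (G.deleteEdges {s(u, v)}).Reachable u v := by
  rw [reachable_deleteEdges_iff_exists_walk]
  obtain rfl | huv := eq_or_ne u v
  · exact ⟨nil, by simp⟩
  obtain ⟨z, hzu, hzv⟩ := h.exists_ne_ne u v
  obtain ⟨p, hvp⟩ := h.exists_walk_notMem_support huv hzv
  obtain ⟨q, huq⟩ := h.exists_walk_notMem_support hzu huv.symm
  refine ⟨p.append q, fun he => ?_⟩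
  rw [edges_append, List.mem_append] at he
  rcases he with he | he
  · exact hvp (p.snd_mem_support_of_mem_edges he)
  · exact huq (q.fst_mem_support_of_mem_edges he)

lemma exists_isCycle_mem_support (h : G.TwoConnected) {u v : V} (huv : u ≠ v) :
    ∃ (b : V) (c : G.Walk b b), c.IsCycle ∧ u ∈ c.support ∧ v ∈ c.support := by
  classical
  obtain ⟨p⟩ := h.preconnected u v
  induction p with
  | nil => exact absurd rfl huv
  | @cons u u' v hadj p ih =>
    obtain rfl | hu'v := eq_or_ne u' v
    · obtain ⟨b, c, hc, he⟩ :=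
        adj_and_reachable_delete_edges_iff_exists_cycle.mp ⟨hadj, h.reachable_deleteEdges u u'⟩
      exact ⟨b, c, hc, c.fst_mem_support_of_mem_edges he, c.snd_mem_support_of_mem_edges he⟩
    obtain ⟨b, c, hc, hu'c, hvc⟩ := ih hu'v
    by_cases huc : u ∈ c.support
    · exact ⟨b, c, hc, huc, hvc⟩
    obtain ⟨q, hu'q⟩ := h.exists_walk_notMem_support hadj.ne hu'v.symm
    have hmem (x : V) := c.mem_support_rotate_iff (w := x) u' hu'c
    exact (hc.rotate hu'c).exists_isCycle_mem_support_of_adj ((hmem v).mpr hvc)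
      (fun h' => huc ((hmem u).mp h')) hadj.symm q hu'q

lemma deleteEdges_of_isChord_s1 (h : G.TwoConnected) {u : V} {c : G.Walk u u} (hc : c.IsCycle)
    {e : Sym2 V} (he : c.IsChord e) : (G.deleteEdges {e}).TwoConnected := by
  refine ⟨h.1, fun z => (h.2 z).of_forall_adj_reachable_s1 fun a b hab => ?_⟩
  by_cases hab' : s(a.1, b.1) = e
  · subst hab'
    obtain ⟨-, hce, ha, hb⟩ := isChord_sym2Mk.mp he
    obtain ⟨p, hpc, hzp⟩ := hc.exists_walk_notMem_support ha hb (Ne.symm a.2) (Ne.symm b.2)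
    have hpe : ∀ e ∈ p.edges, e ∉ ({s(a.1, b.1)} : Set (Sym2 V)) :=
      fun e he' hes => hce (Set.mem_singleton_iff.mp hes ▸ hpc he')
    refine ⟨(p.toDeleteEdges _ hpe).induce {y | y ≠ z} fun x hx hxz => hzp ?_⟩
    rwa [support_transfer, hxz] at hx
  · exact Adj.reachable (by simpa [hab'] using hab)

end TwoConnected

lemma exists_isCycle_isChord_of_twoConnected_deleteEdges [Fintype V] {x y : V}
    (h : (G.deleteEdges {s(x, y)}).TwoConnected) (hxy : G.Adj x y) :
    ∃ (u : V) (c : G.Walk u u), c.IsCycle ∧ c.IsChord s(x, y) := by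
  obtain ⟨b, c, hc, hx, hy⟩ := h.exists_isCycle_mem_support hxy.ne
  refine ⟨b, c.mapLe (deleteEdges_le _), hc.mapLe _, isChord_sym2Mk.mpr ⟨hxy, ?_, ?_, ?_⟩⟩
  · rw [edges_mapLe_eq_edges]
    intro he
    simpa using c.edges_subset_edgeSet he
  · rwa [support_mapLe_eq_support]
  · rwa [support_mapLe_eq_support]

theorem TwoConnected.minimallyTwoConnected_iff [Fintype V] (h : G.TwoConnected) :
    G.MinimallyTwoConnected ↔ ∀ (u : V) (c : G.Walk u u), c.IsCycle → c.IsChordless := by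
  refine ⟨fun hmin u c hc e he => hmin.2 e he.1 (h.deleteEdges_of_isChord_s1 hc he),
    fun hchordless => ⟨h, fun e he hdel => ?_⟩⟩
  induction e with | h x y =>
  obtain ⟨u, c, hc, hchord⟩ := exists_isCycle_isChord_of_twoConnected_deleteEdges hdel he
  exact hchordless u c hc hchord

end SimpleGraph

/-- A `2`-connected simple graph `G` is minimally `2`-connected if and only if
no cycle of `G` has a chord. -/
theorem stmt_1 {V : Type*} [Fintype V] (G : SimpleGraph V) (h : G.TwoConnected) :
    G.MinimallyTwoConnected ↔
      ∀ (v : V) (c : G.Walk v v), c.IsCycle →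
        ¬ ∃ x y : V, x ∈ c.support ∧ y ∈ c.support ∧ G.Adj x y ∧ s(x, y) ∉ c.edges := by
  rw [h.minimallyTwoConnected_iff]
  simp only [SimpleGraph.Walk.isChordless_iff_forall_mem_edges, not_exists, not_and, not_not]
end

section
/- If G is a minimally 2-connected simple graph, then the subgraph of G induced by the set of vertices of degree exceeding 2 is a forest. -/
namespace SimpleGraph

variable {V : Type*} {G K L : SimpleGraph V} {e : Sym2 V} {a b u v w x y z : V}

theorem Reachable.of_forall_adj (h : ∀ p q, K.Reachable a p → K.Adj p q → L.Reachable p q)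
    (hab : K.Reachable a b) : L.Reachable a b := by
  rw [reachable_iff_reflTransGen] at hab
  induction hab with
  | refl => rfl
  | tail hap hpq ih => exact ih.trans (h _ _ ((reachable_iff_reflTransGen _ _).2 hap) hpq)

theorem Reachable.exists_adj_of_ne (hab : K.Reachable a b) (hne : a ≠ b) :
    ∃ c, (K.deleteIncidenceSet b).Reachable a c ∧ K.Adj c b := by
  obtain ⟨p⟩ := hab
  induction p with
  | nil => exact absurd rfl hne
  | @cons p q t hpq _ ih =>
    by_cases hqt : q = t
    · exact ⟨p, .rfl, hqt ▸ hpq⟩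
    · obtain ⟨c, hqc, hct⟩ := ih hqt
      exact ⟨c, (deleteIncidenceSet_adj.2 ⟨hpq, hne, hqt⟩).reachable.trans hqc, hct⟩

theorem eq_of_reachable_deleteIncidenceSet (h : (K.deleteIncidenceSet b).Reachable a b) :
    a = b := by
  by_contra hne
  obtain ⟨c, -, hcb⟩ := h.exists_adj_of_ne hne
  exact (deleteIncidenceSet_adj.1 hcb).2.2 rfl

theorem deleteIncidenceSet_mono (hKL : K ≤ L) :
    K.deleteIncidenceSet u ≤ L.deleteIncidenceSet u := fun _ _ h ↦ by
  rw [deleteIncidenceSet_adj] at h ⊢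
  exact ⟨hKL h.1, h.2⟩

theorem deleteIncidenceSet_le_deleteEdges (hu : u ∈ e) :
    K.deleteIncidenceSet u ≤ K.deleteEdges {e} := fun p q h ↦ by
  rw [deleteIncidenceSet_adj] at h
  refine (deleteEdges_adj ..).2 ⟨h.1, fun hpq ↦ ?_⟩
  rw [Set.mem_singleton_iff] at hpq
  rcases Sym2.mem_iff.1 (hpq ▸ hu) with rfl | rfl
  exacts [h.2.1 rfl, h.2.2 rfl]

theorem deleteIncidenceSet_deleteEdges_of_mem (hu : u ∈ e) :
    (K.deleteEdges {e}).deleteIncidenceSet u = K.deleteIncidenceSet u :=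
  le_antisymm (deleteIncidenceSet_mono (deleteEdges_le _)) fun _ _ h ↦
    deleteIncidenceSet_adj.2 ⟨deleteIncidenceSet_le_deleteEdges hu h,
      (deleteIncidenceSet_adj.1 h).2⟩

theorem preconnected_induce_ne_iff :
    (K.induce {v | v ≠ u}).Preconnected ↔
      ∀ a b, a ≠ u → b ≠ u → (K.deleteIncidenceSet u).Reachable a b := by
  constructor
  · intro h a b ha hb
    let φ : K.induce {v | v ≠ u} →g K.deleteIncidenceSet u :=
      ⟨Subtype.val, fun {p q} hpq ↦ deleteIncidenceSet_adj.2 ⟨hpq, p.2, q.2⟩⟩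
    exact (h ⟨a, ha⟩ ⟨b, hb⟩).map φ
  · classical
    rintro h ⟨a, ha⟩ ⟨b, hb⟩
    obtain ⟨p⟩ := h a b ha hb
    have hp : ∀ z ∈ p.support, z ∈ {v | v ≠ u} := by
      rintro z hz rfl
      exact ha (eq_of_reachable_deleteIncidenceSet (p.takeUntil z hz).reachable)
    rw [← K.induce_deleteIncidenceSet_of_notMem (s := {v | v ≠ u}) (x := u) (by simp)]
    exact ⟨p.induce _ hp⟩

theorem TwoConnected.reachable_deleteIncidenceSet [Fintype V] (hG : G.TwoConnected)
    (ha : a ≠ u) (hb : b ≠ u) : (G.deleteIncidenceSet u).Reachable a b :=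
  preconnected_induce_ne_iff.1 (hG.2 u).preconnected a b ha hb

/-- The component of `x` in `G - e - w`; it is `{x}` when `w = x`. -/
def side (G : SimpleGraph V) (e : Sym2 V) (w x : V) : Set V :=
  {z | ((G.deleteEdges {e}).deleteIncidenceSet w).Reachable x z}

theorem self_mem_side : x ∈ G.side e w x := Reachable.rfl

theorem notMem_side_self (hwx : w ≠ x) : w ∉ G.side e w x :=
  fun h ↦ hwx (eq_of_reachable_deleteIncidenceSet h).symm

theorem side_subset_setOf_reachable (hv : v ∉ G.side e w x) (hu : u ∉ G.side e w x) :
    G.side e w x ⊆ {z | ((G.deleteIncidenceSet v).deleteIncidenceSet u).Reachable x z} :=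
  fun _ hz ↦ Reachable.of_forall_adj (fun p q hp hpq ↦ by
    have hq : q ∈ G.side e w x := Reachable.trans hp hpq.reachable
    obtain ⟨⟨hpq, -⟩, -⟩ := deleteIncidenceSet_adj.1 hpq
    refine (deleteIncidenceSet_adj.2 ⟨deleteIncidenceSet_adj.2 ⟨hpq, ?_, ?_⟩, ?_, ?_⟩).reachable
    all_goals rintro rfl; contradiction) hz

/-- `z` reaches `w` by a path that avoids `v` and whose interior stays on the side of `x`. -/
theorem reachable_of_mem_side [Fintype V] (hG : G.TwoConnected) (hv : v ∈ e) (hwv : w ≠ v)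
    (hwx : w ≠ x) (hz : z ∈ G.side e w x) (hzv : z ≠ v) (hu : u ∉ G.side e w x) (huw : u ≠ w) :
    ((G.deleteIncidenceSet v).deleteIncidenceSet u).Reachable z w := by
  have hzw : z ≠ w := fun h ↦ notMem_side_self hwx (h ▸ hz)
  obtain ⟨c, hzc, hcw⟩ := (hG.reachable_deleteIncidenceSet hzv hwv).exists_adj_of_ne hzw
  have hside (t : V) (ht : ((G.deleteIncidenceSet v).deleteIncidenceSet w).Reachable z t) :
      t ∈ G.side e w x :=
    Reachable.trans hz (ht.mono (deleteIncidenceSet_mono (deleteIncidenceSet_le_deleteEdges hv)))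
  have hcu : c ≠ u := fun h ↦ hu (h ▸ hside c hzc)
  refine .trans (hzc.of_forall_adj fun p q hp hpq ↦ ?_)
    (deleteIncidenceSet_adj.2 ⟨hcw, hcu, huw.symm⟩).reachable
  have hpu : p ≠ u := fun h ↦ hu (h ▸ hside p hp)
  have hqu : q ≠ u := fun h ↦ hu (h ▸ hside q (hp.trans hpq.reachable))
  exact (deleteIncidenceSet_adj.2 ⟨(deleteIncidenceSet_adj.1 hpq).1, hpu, hqu⟩).reachable

structure SeparatesEdge (G : SimpleGraph V) (w x y : V) : Prop where
  ne_left : w ≠ x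
  ne_right : w ≠ y
  notMem_side : y ∉ G.side s(x, y) w x

namespace SeparatesEdge

protected theorem symm (hs : G.SeparatesEdge w x y) : G.SeparatesEdge w y x :=
  ⟨hs.ne_right, hs.ne_left, fun h ↦ hs.notMem_side (Sym2.eq_swap ▸ h).symm⟩

theorem disjoint_side (hs : G.SeparatesEdge w x y) :
    Disjoint (G.side s(x, y) w x) (G.side s(x, y) w y) :=
  Set.disjoint_left.2 fun _ hzx hzy ↦ hs.notMem_side (Reachable.trans hzx (Reachable.symm hzy))

theorem mem_side_or_mem_side [Fintype V] (hs : G.SeparatesEdge w x y) (hG : G.TwoConnected)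
    (hz : z ≠ w) : z ∈ G.side s(x, y) w x ∨ z ∈ G.side s(x, y) w y := by
  have hxz := hG.reachable_deleteIncidenceSet hs.ne_left.symm hz
  clear hz
  rw [reachable_iff_reflTransGen] at hxz
  induction hxz with
  | refl => exact .inl self_mem_side
  | @tail c z _ hcz ih =>
    obtain ⟨hcz, hcw, hzw⟩ := deleteIncidenceSet_adj.1 hcz
    by_cases he : s(c, z) = s(x, y)
    · rcases Sym2.mem_iff.1 (he ▸ Sym2.mem_mk_right c z : z ∈ s(x, y)) with rfl | rfl
      exacts [.inl self_mem_side, .inr self_mem_side]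
    · have hcz' : ((G.deleteEdges {s(x, y)}).deleteIncidenceSet w).Adj c z := by
        simp [deleteIncidenceSet_adj, hcz, he, hcw, hzw]
      exact ih.imp (Reachable.trans · hcz'.reachable) (Reachable.trans · hcz'.reachable)

theorem mem_side_of_adj (hs : G.SeparatesEdge w x y) (hxz : G.Adj x z) (hzy : z ≠ y)
    (hzw : z ≠ w) : z ∈ G.side s(x, y) w x := by
  refine Adj.reachable <|
    deleteIncidenceSet_adj.2 ⟨(deleteEdges_adj ..).2 ⟨hxz, ?_⟩, hs.ne_left.symm, hzw⟩
  simp only [Set.mem_singleton_iff, Sym2.eq_iff, true_and, hzy, false_or, not_and]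
  rintro rfl rfl
  exact hzy rfl

/-- If `w₂` is off the side `B` of `y`, then `B ∪ {w}` lies in one component of `G - xa - w₂`,
so the other one lies inside the side of `x`. -/
theorem side_ssubset [Fintype V] {w₂ : V} (hs : G.SeparatesEdge w x y) (hG : G.TwoConnected)
    (hxa : G.Adj x a) (hay : a ≠ y) (hs₂ : G.SeparatesEdge w₂ x a)
    (hw₂ : w₂ ∉ G.side s(x, y) w y) :
    G.side s(x, a) w₂ a ⊂ G.side s(x, y) w x ∨ G.side s(x, a) w₂ x ⊂ G.side s(x, y) w x := by
  set A := G.side s(x, y) w x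
  set R := {z | ((G.deleteIncidenceSet x).deleteIncidenceSet w₂).Reachable y z}
  have hxA : x ∈ A := self_mem_side
  have hBR : G.side s(x, y) w y ⊆ R :=
    side_subset_setOf_reachable (hs.disjoint_side.notMem_of_mem_left hxA) hw₂
  have hwR (hw₂w : w₂ ≠ w) : w ∈ R :=
    reachable_of_mem_side hG (Sym2.mem_mk_left x y) hs.ne_left hs.ne_right self_mem_side
      (fun h ↦ hs.notMem_side (h ▸ self_mem_side)) hw₂ hw₂w
  have hA (z : V) (hzw₂ : z ≠ w₂) (hzR : z ∉ R) : z ∈ A := by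
    refine (hs.mem_side_or_mem_side hG fun hzw ↦ ?_).resolve_right fun hzB ↦ hzR (hBR hzB)
    subst hzw
    exact hzR (hwR hzw₂.symm)
  have hRle : (G.deleteIncidenceSet x).deleteIncidenceSet w₂ ≤
      (G.deleteEdges {s(x, a)}).deleteIncidenceSet w₂ :=
    deleteIncidenceSet_mono (deleteIncidenceSet_le_deleteEdges (Sym2.mem_mk_left x a))
  have hyw₂ : y ≠ w₂ := fun h ↦ hw₂ (h ▸ self_mem_side)
  rcases hs₂.mem_side_or_mem_side hG hyw₂ with hyM | hyN
  · refine .inl ((Set.ssubset_iff_of_subset fun z hz ↦ hA z ?_ fun hzR ↦ ?_).2 ⟨x, hxA, ?_⟩)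
    · exact fun h ↦ notMem_side_self hs₂.ne_right (h ▸ hz)
    · exact hs₂.disjoint_side.notMem_of_mem_right hz (Reachable.trans hyM (hzR.mono hRle))
    · exact hs₂.disjoint_side.notMem_of_mem_left self_mem_side
  · refine .inr ((Set.ssubset_iff_of_subset fun z hz ↦ hA z ?_ fun hzR ↦ ?_).2 ?_)
    · exact fun h ↦ notMem_side_self hs₂.ne_left (h ▸ hz)
    · exact hs₂.disjoint_side.notMem_of_mem_left hz (Reachable.trans hyN (hzR.mono hRle))
    by_cases hw₂w : w₂ = w
    · have haw : a ≠ w := hw₂w ▸ hs₂.ne_right.symm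
      exact ⟨a, hs.mem_side_of_adj hxa hay haw,
        hs₂.disjoint_side.notMem_of_mem_right self_mem_side⟩
    · exact ⟨w₂, (hs.mem_side_or_mem_side hG hw₂w).resolve_right hw₂,
        notMem_side_self hs₂.ne_left⟩

theorem degree_le_two [Fintype V] [DecidableRel G.Adj] {w₂ : V} (hs : G.SeparatesEdge w x y)
    (hG : G.TwoConnected) (hxa : G.Adj x a) (hay : a ≠ y) (hs₂ : G.SeparatesEdge w₂ x a)
    (hw₂ : w₂ ∈ G.side s(x, y) w y) : G.degree x ≤ 2 := by
  classical
  have hw₂w : w₂ ≠ w := fun h ↦ notMem_side_self hs.ne_right (h ▸ hw₂)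
  have hreach (z : V) (hxz : G.Adj x z) (hzy : z ≠ y) :
      ((G.deleteIncidenceSet x).deleteIncidenceSet w₂).Reachable z w := by
    by_cases hzw : z = w
    · exact hzw ▸ .rfl
    · exact reachable_of_mem_side hG (Sym2.mem_mk_left x y) hs.ne_left hs.ne_left
        (hs.mem_side_of_adj hxz hzy hzw) (G.ne_of_adj hxz).symm
        (hs.disjoint_side.notMem_of_mem_right hw₂) hw₂w
  have hRle : (G.deleteIncidenceSet x).deleteIncidenceSet w₂ ≤
      (G.deleteEdges {s(x, a)}).deleteIncidenceSet w₂ :=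
    deleteIncidenceSet_mono (deleteIncidenceSet_le_deleteEdges (Sym2.mem_mk_left x a))
  have hN : G.neighborFinset x ⊆ {y, a} := by
    intro z hxz
    rw [mem_neighborFinset] at hxz
    by_contra! hz
    simp only [Finset.mem_insert, Finset.mem_singleton, not_or] at hz
    have hzw₂ : z ≠ w₂ := by
      rintro rfl
      exact hw₂w (eq_of_reachable_deleteIncidenceSet (hreach z hxz hz.1).symm).symm
    have hxz' : ((G.deleteEdges {s(x, a)}).deleteIncidenceSet w₂).Adj x z := by
      simp [deleteIncidenceSet_adj, hxz, hz.2, hs₂.ne_left.symm, hzw₂, (G.ne_of_adj hxz).symm]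
    exact hs₂.notMem_side <| hxz'.reachable.trans <|
      ((hreach z hxz hz.1).trans (hreach a hxa hay).symm).mono hRle
  rw [← card_neighborFinset_eq_degree]
  exact (Finset.card_le_card hN).trans Finset.card_le_two

end SeparatesEdge

theorem MinimallyTwoConnected.exists_separatesEdge [Fintype V] (h : G.MinimallyTwoConnected)
    (hxy : G.Adj x y) : ∃ w, G.SeparatesEdge w x y := by
  by_contra hno
  refine h.2 s(x, y) hxy ⟨h.1.1, fun u ↦ ?_⟩
  obtain ⟨v, hv⟩ := Fintype.exists_ne_of_one_lt_card (by linarith [h.1.1]) u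
  have : Nonempty {z | z ≠ u} := ⟨⟨v, hv⟩⟩
  refine (connected_iff _).2 ⟨preconnected_induce_ne_iff.2 fun a b ha hb ↦ ?_, this⟩
  have hab := h.1.reachable_deleteIncidenceSet ha hb
  by_cases hu : u ∈ s(x, y)
  · rwa [deleteIncidenceSet_deleteEdges_of_mem hu]
  have hxy' : y ∈ G.side s(x, y) u x := by
    by_contra hy
    simp only [Sym2.mem_iff, not_or] at hu
    exact hno ⟨u, hu.1, hu.2, hy⟩
  refine hab.of_forall_adj fun p q _ hpq ↦ ?_
  obtain ⟨hpq, hpu, hqu⟩ := deleteIncidenceSet_adj.1 hpq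
  by_cases he : s(p, q) = s(x, y)
  · rcases Sym2.eq_iff.1 he with ⟨rfl, rfl⟩ | ⟨rfl, rfl⟩
    exacts [hxy', hxy'.symm]
  · exact (deleteIncidenceSet_adj.2 ⟨(deleteEdges_adj ..).2 ⟨hpq, he⟩, hpu, hqu⟩).reachable

theorem SeparatesEdge.exists_ssubset [Fintype V] [DecidableRel G.Adj]
    (h : G.MinimallyTwoConnected) (hs : G.SeparatesEdge w x y) (hxa : G.Adj x a) (hay : a ≠ y)
    (hx : 2 < G.degree x) :
    ∃ u, (G.SeparatesEdge u x a ∧ G.side s(x, a) u x ⊂ G.side s(x, y) w x) ∨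
      (G.SeparatesEdge u a x ∧ G.side s(a, x) u a ⊂ G.side s(x, y) w x) := by
  obtain ⟨w₂, hs₂⟩ := h.exists_separatesEdge hxa
  by_cases hw₂ : w₂ ∈ G.side s(x, y) w y
  · exact absurd (hs.degree_le_two h.1 hxa hay hs₂ hw₂) hx.not_ge
  refine ⟨w₂, (hs.side_ssubset h.1 hxa hay hs₂ hw₂).symm.imp (⟨hs₂, ·⟩) fun hN ↦ ⟨?_, ?_⟩⟩
  · exact hs₂.symm
  · rwa [Sym2.eq_swap]

theorem MinimallyTwoConnected.eq_empty_of_two_le_ncard [Fintype V] [DecidableRel G.Adj]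
    (h : G.MinimallyTwoConnected) {S : Set V} (hdeg : ∀ x ∈ S, 2 < G.degree x)
    (hS : ∀ x ∈ S, 2 ≤ (G.neighborSet x ∩ S).ncard) : S = ∅ := by
  by_contra hne
  obtain ⟨x₀, hx₀⟩ := Set.nonempty_iff_ne_empty.2 hne
  obtain ⟨y₀, ⟨hxy₀, hy₀⟩, -⟩ := Set.exists_ne_of_one_lt_ncard (hS x₀ hx₀) x₀
  obtain ⟨w₀, hs₀⟩ := h.exists_separatesEdge hxy₀
  obtain ⟨⟨x, y, w⟩, ⟨hx, -, hxy, hs⟩, hmin⟩ := exists_minimalFor_of_wellFoundedLT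
    (fun i : V × V × V ↦ i.1 ∈ S ∧ i.2.1 ∈ S ∧ G.Adj i.1 i.2.1 ∧ G.SeparatesEdge i.2.2 i.1 i.2.1)
    (fun i ↦ G.side s(i.1, i.2.1) i.2.2 i.1) ⟨(x₀, y₀, w₀), hx₀, hy₀, hxy₀, hs₀⟩
  obtain ⟨a, ⟨hxa, ha⟩, hay⟩ := Set.exists_ne_of_one_lt_ncard (hS x hx) y
  obtain ⟨u, ⟨hsu, hlt⟩ | ⟨hsu, hlt⟩⟩ := hs.exists_ssubset h hxa hay (hdeg x hx)
  · exact hlt.not_subset (hmin (j := (x, a, u)) ⟨hx, ha, hxa, hsu⟩ hlt.subset)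
  · exact hlt.not_subset (hmin (j := (a, x, u)) ⟨ha, hx, hxa.symm, hsu⟩ hlt.subset)

theorem Walk.IsCycle.two_le_ncard_neighborSet_inter_support [Finite V] {C : G.Walk u u}
    (hC : C.IsCycle) (hv : v ∈ C.support) :
    2 ≤ (G.neighborSet v ∩ {z | z ∈ C.support}).ncard := by
  rw [← hC.ncard_neighborSet_toSubgraph_eq_two hv]
  refine Set.ncard_le_ncard (fun z hz ↦ ⟨C.toSubgraph.adj_sub hz, ?_⟩) (Set.toFinite _)
  exact C.mem_verts_toSubgraph.1 hz.snd_mem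

end SimpleGraph

open SimpleGraph in
theorem stmt_2_general {V : Type*} [Fintype V] (G : SimpleGraph V)
    [DecidableRel G.Adj] (h : G.MinimallyTwoConnected) :
    (G.induce {v : V | 2 < G.degree v}).IsAcyclic := by
  intro v c hc
  let φ := Embedding.induce (G := G) {v : V | 2 < G.degree v}
  set C := c.map φ.toHom
  have hC : C.IsCycle := (Walk.isCycle_map_iff_of_injective φ.injective).2 hc
  have hdeg : ∀ z ∈ {z | z ∈ C.support}, 2 < G.degree z := by
    intro z hz
    obtain ⟨⟨z, hzT⟩, -, rfl⟩ := List.mem_map.1 (Walk.support_map _ _ ▸ hz)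
    exact hzT
  have hS := h.eq_empty_of_two_le_ncard hdeg fun z hz ↦
    hC.two_le_ncard_neighborSet_inter_support hz
  exact hS.subset C.start_mem_support

/-- In a minimally `2`-connected simple graph, the subgraph induced by the vertices of
degree exceeding `2` is a forest. -/
theorem stmt_2 {V : Type*} [Fintype V] [DecidableEq V] (G : SimpleGraph V)
    [DecidableRel G.Adj] (h : G.MinimallyTwoConnected) :
    (G.induce {v : V | 2 < G.degree v}).IsAcyclic :=
  stmt_2_general G h
end

section
/- If G is a minimally 2-connected simple graph and u and v are adjacent vertices each of degree at least 3 in G, then the maximum number of internally disjoint u–v paths in G is exactly 2. -/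
/-!
The edge `uv` and any `u`–`v` path of `G - uv` are two internally disjoint paths, and such a path
exists: for a third vertex `x`, `G - v` joins `u` to `x` and `G - u` joins `x` to `v`.
Conversely, three internally disjoint `u`–`v` paths would make `G - uv` 2-connected, against
minimality: for `x ∉ {u, v}`, at most one of the paths meets `x` and at most one uses `uv`, so
some path survives in `G - x - uv`, i.e. `uv` is not a bridge of the connected graph `G - x`.
-/

open Finset

namespace SimpleGraph

variable {V : Type*} {G : SimpleGraph V} {u v : V}

lemma IntDisjoint.symm {p q : G.Walk u v} (h : G.IntDisjoint p q) : G.IntDisjoint q p :=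
  ⟨fun w hq hp => h.1 w hp hq, fun e hq hp => h.2 e hp hq⟩

lemma intDisjoint_cons_nil (huv : G.Adj u v) {p : G.Walk u v} (hp : s(u, v) ∉ p.edges) :
    G.IntDisjoint (.cons huv .nil) p := by
  refine ⟨fun w hw _ => by simpa using hw, fun e he => ?_⟩
  rw [Walk.edges_cons, Walk.edges_nil, List.mem_singleton] at he
  exact he ▸ hp

lemma induce_deleteEdges_of_notMem {s : Set V} (hs : u ∉ s ∨ v ∉ s) :
    (G.deleteEdges {s(u, v)}).induce s = G.induce s := by
  ext a b
  simp only [comap_adj, Function.Embedding.coe_subtype, deleteEdges_adj, Set.mem_singleton_iff,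
    and_iff_left_iff_imp]
  rintro - he
  rw [Sym2.eq_iff] at he
  rcases he with ⟨rfl, rfl⟩ | ⟨rfl, rfl⟩ <;> simp_all

lemma induce_deleteEdges_of_mem {s : Set V} (hu : u ∈ s) (hv : v ∈ s) :
    (G.deleteEdges {s(u, v)}).induce s = (G.induce s).deleteEdges {s(⟨u, hu⟩, ⟨v, hv⟩)} := by
  ext a b
  simp [Subtype.ext_iff]

lemma reachable_deleteEdges_of_reachable_induce {s : Set V} (hs : u ∉ s ∨ v ∉ s) {a b : s}
    (h : (G.induce s).Reachable a b) : (G.deleteEdges {s(u, v)}).Reachable a b := by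
  rw [← induce_deleteEdges_of_notMem hs] at h
  exact h.map (Embedding.induce s).toHom

section Family

variable [DecidableEq V] {k : ℕ} {p : Fin k → G.Walk u v}

lemma card_filter_mem_support_le_one (hp : ∀ i j, i ≠ j → G.IntDisjoint (p i) (p j)) {x : V}
    (hxu : x ≠ u) (hxv : x ≠ v) : #{i | x ∈ (p i).support} ≤ 1 := by
  refine card_le_one.2 fun i hi j hj => ?_
  by_contra hij
  simp only [mem_filter, mem_univ, true_and] at hi hj
  exact (hp i j hij).1 x hi hj |>.elim hxu hxv

lemma card_filter_mem_edges_le_one (hp : ∀ i j, i ≠ j → G.IntDisjoint (p i) (p j))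
    (e : Sym2 V) : #{i | e ∈ (p i).edges} ≤ 1 := by
  refine card_le_one.2 fun i hi j hj => ?_
  by_contra hij
  simp only [mem_filter, mem_univ, true_and] at hi hj
  exact (hp i j hij).2 e hi hj

lemma exists_notMem_support_notMem_edges (hp : ∀ i j, i ≠ j → G.IntDisjoint (p i) (p j))
    (hk : 3 ≤ k) {x : V} (hxu : x ≠ u) (hxv : x ≠ v) (e : Sym2 V) :
    ∃ i, x ∉ (p i).support ∧ e ∉ (p i).edges := by
  let A : Finset (Fin k) := {i | x ∈ (p i).support}
  let B : Finset (Fin k) := {i | e ∈ (p i).edges}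
  have hcard : #(A ∪ B) < #(univ : Finset (Fin k)) :=
    calc #(A ∪ B) ≤ #A + #B := card_union_le A B
      _ ≤ 1 + 1 := add_le_add (card_filter_mem_support_le_one hp hxu hxv)
          (card_filter_mem_edges_le_one hp e)
      _ < #(univ : Finset (Fin k)) := by rw [card_univ, Fintype.card_fin]; omega
  obtain ⟨i, -, hi⟩ := exists_mem_notMem_of_card_lt_card hcard
  exact ⟨i, by simpa [A, B, not_or] using hi⟩

end Family

variable [Fintype V]

lemma TwoConnected.exists_ne_ne_s4 (hG : G.TwoConnected) (u v : V) : ∃ x, x ≠ u ∧ x ≠ v := by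
  classical
  obtain ⟨x, -, hx⟩ := exists_mem_notMem_of_card_lt_card (s := {u, v}) (t := univ)
    (card_le_two.trans_lt (by rw [card_univ]; exact hG.1))
  exact ⟨x, by simpa [not_or] using hx⟩

lemma TwoConnected.reachable_deleteEdges_s4 (hG : G.TwoConnected) (huv : u ≠ v) :
    (G.deleteEdges {s(u, v)}).Reachable u v := by
  obtain ⟨x, hxu, hxv⟩ := hG.exists_ne_ne_s4 u v
  have hux : (G.deleteEdges {s(u, v)}).Reachable u x :=
    reachable_deleteEdges_of_reachable_induce (s := {y | y ≠ v}) (by simp)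
      ((hG.2 v).preconnected ⟨u, huv⟩ ⟨x, hxv⟩)
  have hxv : (G.deleteEdges {s(u, v)}).Reachable x v :=
    reachable_deleteEdges_of_reachable_induce (s := {y | y ≠ u}) (by simp)
      ((hG.2 u).preconnected ⟨x, hxu⟩ ⟨v, huv.symm⟩)
  exact hux.trans hxv

lemma TwoConnected.exists_two_disjoint_paths (hG : G.TwoConnected) (huv : G.Adj u v) :
    ∃ p : Fin 2 → G.Walk u v, (∀ i, (p i).IsPath) ∧ ∀ i j, i ≠ j → G.IntDisjoint (p i) (p j) := by
  classical
  obtain ⟨q, hq⟩ := reachable_deleteEdges_iff_exists_walk.1 (hG.reachable_deleteEdges_s4 huv.ne)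
  have hd := intDisjoint_cons_nil huv fun h => hq (q.edges_toPath_subset_edges h)
  refine ⟨![.cons huv .nil, q.toPath], fun i => ?_, fun i j hij => ?_⟩
  · fin_cases i
    · simpa using huv.ne
    · exact q.toPath.2
  · fin_cases i <;> fin_cases j
    all_goals first | exact absurd rfl hij | exact hd | exact hd.symm

lemma TwoConnected.deleteEdges_of_three_disjoint_walks (hG : G.TwoConnected) {k : ℕ} (hk : 3 ≤ k)
    (p : Fin k → G.Walk u v) (hp : ∀ i j, i ≠ j → G.IntDisjoint (p i) (p j)) :
    (G.deleteEdges {s(u, v)}).TwoConnected := by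
  classical
  refine ⟨hG.1, fun x => ?_⟩
  by_cases hx : x = u ∨ x = v
  · rw [induce_deleteEdges_of_notMem (by rcases hx with rfl | rfl <;> simp)]
    exact hG.2 x
  push Not at hx
  obtain ⟨i, hxi, hei⟩ := exists_notMem_support_notMem_edges hp hk hx.1 hx.2 s(u, v)
  have hsupp : ∀ y ∈ ((p i).toDeleteEdge _ hei).support, y ∈ {y | y ≠ x} := by
    intro y hy
    rw [Walk.support_transfer] at hy
    exact fun h => hxi (h ▸ hy)
  rw [induce_deleteEdges_of_mem hx.1.symm hx.2.symm]
  refine (hG.2 x).connected_delete_edge_of_not_isBridge ?_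
  rw [isBridge_iff, not_not, ← induce_deleteEdges_of_mem]
  exact ⟨((p i).toDeleteEdge _ hei).induce _ hsupp⟩

end SimpleGraph

open SimpleGraph

theorem stmt_4_general {V : Type*} [Fintype V] (G : SimpleGraph V)
    (h : G.MinimallyTwoConnected)
    (u v : V) (huv : G.Adj u v) :
    G.kappa u v = 2 := by
  refine IsGreatest.csSup_eq ⟨h.1.exists_two_disjoint_paths huv, fun k ⟨p, _, hp⟩ => ?_⟩
  by_contra! hk
  exact h.2 _ huv (h.1.deleteEdges_of_three_disjoint_walks hk p hp)

/-- If `G` is a minimally `2`-connected simple graph and `u` and `v` are adjacent vertices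
of degree at least `3`, then `κ_G(u,v) = 2`. -/
theorem stmt_4 {V : Type*} [Fintype V] [DecidableEq V] (G : SimpleGraph V)
    [DecidableRel G.Adj] (h : G.MinimallyTwoConnected)
    (u v : V) (huv : G.Adj u v) (hu : 3 ≤ G.degree u) (hv : 3 ≤ G.degree v) :
    G.kappa u v = 2 :=
  stmt_4_general G h u v huv
end

section
/- Let d_1, ..., d_n be a sequence of positive integers with sum D, and write D = dn + r with integers d ≥ 0 and 0 ≤ r < n. Then the potential P(d_1,...,d_n) = ∑_{i<j} min(d_i, d_j) is at most the potential of the nearly regular sequence consisting of n − r copies of d and r copies of d + 1. -/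
open Finset

/-- The potential of a finite sequence of integers: `∑_{i<j} min(d_i, d_j)`. -/
def potential (n : ℕ) (d : Fin n → ℕ) : ℕ :=
  ∑ i : Fin n, ∑ j ∈ Finset.Ioi i, min (d i) (d j)

lemma pot_swap (n : ℕ) (f : Fin n → Fin n → ℕ) :
    ∑ i, ∑ j ∈ Ioi i, f i j = ∑ j, ∑ i ∈ Iio j, f i j :=
  Finset.sum_comm' (by simp)

lemma split_univ_sum (n : ℕ) (k : Fin n) (f : Fin n → ℕ) :
    ∑ i, f i = ∑ i ∈ Iio k, f i + ∑ i ∈ Ici k, f i := by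
  rw [← Finset.sum_union]
  · congr 1
    ext i
    simp [lt_or_ge i k, Finset.mem_union]
  · intro s hs1 hs2 i hi
    have h1 := hs1 hi
    have h2 := hs2 hi
    simp only [Finset.mem_Iio, Finset.mem_Ici] at h1 h2
    exact absurd h2 (not_le.mpr h1)

lemma two_pot (n : ℕ) (d : Fin n → ℕ) :
    2 * potential n d + ∑ i, d i = ∑ i, ∑ j, min (d i) (d j) := by
  symm
  have key : ∀ i : Fin n, ∑ j, min (d i) (d j)
      = ∑ j ∈ Iio i, min (d i) (d j) + (d i + ∑ j ∈ Ioi i, min (d i) (d j)) := by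
    intro i
    rw [split_univ_sum n i]
    congr 1
    rw [show (Ici i) = insert i (Ioi i) by ext j; simp [le_iff_lt_or_eq, eq_comm, or_comm]]
    rw [Finset.sum_insert (by simp)]
    simp
  calc ∑ i, ∑ j, min (d i) (d j)
      = ∑ i, (∑ j ∈ Iio i, min (d i) (d j) + (d i + ∑ j ∈ Ioi i, min (d i) (d j))) :=
        Finset.sum_congr rfl fun i _ => key i
    _ = (∑ i, ∑ j ∈ Iio i, min (d i) (d j)) + ((∑ i, d i) + ∑ i, ∑ j ∈ Ioi i, min (d i) (d j)) := by
        rw [Finset.sum_add_distrib, Finset.sum_add_distrib]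
    _ = 2 * potential n d + ∑ i, d i := by
        have : ∑ i, ∑ j ∈ Ioi i, min (d i) (d j) = ∑ i, ∑ j ∈ Iio i, min (d i) (d j) := by
          rw [pot_swap n (fun i j => min (d i) (d j))]
          exact Finset.sum_congr rfl fun j _ => Finset.sum_congr rfl fun i _ => min_comm _ _
        rw [potential, this]; ring

lemma pot_comp_perm (n : ℕ) (d : Fin n → ℕ) (σ : Equiv.Perm (Fin n)) :
    potential n (d ∘ σ) = potential n d := by
  have h1 := two_pot n (d ∘ σ)
  have h2 := two_pot n d
  have h3 : ∑ i, ∑ j, min ((d ∘ σ) i) ((d ∘ σ) j) = ∑ i, ∑ j, min (d i) (d j) := by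
    calc ∑ i, ∑ j, min (d (σ i)) (d (σ j)) = ∑ i, ∑ j, min (d (σ i)) (d j) :=
          Finset.sum_congr rfl fun i _ => Equiv.sum_comp σ (fun j => min (d (σ i)) (d j))
      _ = ∑ i, ∑ j, min (d i) (d j) := Equiv.sum_comp σ (fun i => ∑ j, min (d i) (d j))
  have h4 : ∑ i, (d ∘ σ) i = ∑ i, d i := Equiv.sum_comp σ d
  omega

lemma pot_monotone_eq (n : ℕ) (e : Fin n → ℕ) (he : Monotone e) :
    potential n e = ∑ k : Fin n, ∑ i ∈ Iio k, e i := by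
  rw [potential, ← pot_swap n (fun i _ => e i)]
  refine Finset.sum_congr rfl fun i _ => Finset.sum_congr rfl fun j hj => ?_
  exact min_eq_left (he (le_of_lt (Finset.mem_Ioi.mp hj)))

lemma prefix_bound {n : ℕ} (q r : ℕ) (hr : r < n) (e : Fin n → ℕ) (he : Monotone e)
    (hsum : ∑ i, e i = q * n + r) (k : Fin n) :
    ∑ i ∈ Iio k, e i ≤ (k : ℕ) * q + ((k : ℕ) - (n - r)) := by
  by_contra hcon
  push_neg at hcon
  have hex : ∃ i ∈ Iio k, q + 1 ≤ e i := by
    by_contra hall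
    push_neg at hall
    have h1 : ∑ i ∈ Iio k, e i ≤ (k : ℕ) * q := by
      calc ∑ i ∈ Iio k, e i ≤ ∑ _i ∈ Iio k, q :=
            Finset.sum_le_sum fun i hi => by have := hall i hi; omega
        _ = (k : ℕ) * q := by rw [Finset.sum_const, Fin.card_Iio, smul_eq_mul]
    omega
  obtain ⟨i0, hi0k, hi0⟩ := hex
  have hsuf : ∀ j ∈ Ici k, q + 1 ≤ e j := by
    intro j hj
    exact le_trans hi0 (he (le_of_lt (lt_of_lt_of_le (Finset.mem_Iio.mp hi0k)
      (Finset.mem_Ici.mp hj))))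
  set m : ℕ := n - (k : ℕ) with hm
  have h2 : m * q + m ≤ ∑ j ∈ Ici k, e j := by
    calc m * q + m = m * (q + 1) := by ring
      _ = ∑ _j ∈ Ici k, (q + 1) := by rw [Finset.sum_const, Fin.card_Ici, smul_eq_mul]
      _ ≤ ∑ j ∈ Ici k, e j := Finset.sum_le_sum hsuf
  have hsplit : ∑ i ∈ Iio k, e i + ∑ j ∈ Ici k, e j = q * n + r := by
    rw [← split_univ_sum n k e]; exact hsum
  have hkn : (k : ℕ) < n := k.isLt
  have key : (k : ℕ) * q + m * q = n * q := by
    rw [← add_mul]; congr 1; omega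
  have htm : r ≤ ((k : ℕ) - (n - r)) + m := by omega
  have hnq : n * q = q * n := mul_comm n q
  linarith

lemma prefix_c {n : ℕ} (q r : ℕ) (hr : r < n) (k : Fin n) :
    ∑ i ∈ Iio k, (if (i : ℕ) < n - r then q else q + 1)
      = (k : ℕ) * q + ((k : ℕ) - (n - r)) := by
  have step : ∀ i : Fin n, (if (i : ℕ) < n - r then q else q + 1)
      = q + (if (i : ℕ) < n - r then 0 else 1) := by
    intro i; split_ifs <;> ring
  simp_rw [step]
  rw [Finset.sum_add_distrib, Finset.sum_const, Fin.card_Iio, smul_eq_mul]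
  congr 1
  have : ∑ i ∈ Iio k, (if (i : ℕ) < n - r then 0 else 1)
      = ((Iio k).filter (fun i : Fin n => ¬ (i : ℕ) < n - r)).card := by
    rw [Finset.card_filter]
    exact Finset.sum_congr rfl fun i _ => by split_ifs <;> simp_all
  rw [this]
  rcases Nat.eq_zero_or_pos r with hr0 | hrpos
  · subst hr0
    have : (Iio k).filter (fun i : Fin n => ¬ (i : ℕ) < n - 0) = ∅ := by
      ext i; simp [i.isLt]
    rw [this]
    simp [Nat.sub_eq_zero_of_le (le_of_lt k.isLt)]
  · have hlt : n - r < n := by omega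
    have : (Iio k).filter (fun i : Fin n => ¬ (i : ℕ) < n - r) = Ico (⟨n - r, hlt⟩ : Fin n) k := by
      ext i
      simp only [Finset.mem_filter, Finset.mem_Iio, Finset.mem_Ico, not_lt]
      constructor
      · rintro ⟨h1, h2⟩; exact ⟨by simpa [Fin.le_def] using h2, h1⟩
      · rintro ⟨h1, h2⟩; exact ⟨h2, by simpa [Fin.le_def] using h1⟩
    rw [this, Fin.card_Ico]

/-- Among sequences of `n` positive integers with fixed sum `D = q·n + r` (`0 ≤ r < n`),
the potential is at most that of the nearly regular sequence consisting of `n - r` copies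
of `q` and `r` copies of `q + 1`. -/
theorem stmt_6 (n : ℕ) (d : Fin n → ℕ) (hpos : ∀ i, 0 < d i)
    (q r : ℕ) (hr : r < n) (hsum : ∑ i, d i = q * n + r) :
    potential n d ≤ potential n (fun i => if (i : ℕ) < n - r then q else q + 1) := by
  set c : Fin n → ℕ := fun i => if (i : ℕ) < n - r then q else q + 1 with hc
  set σ := Tuple.sort d with hσ
  have hmono : Monotone (d ∘ σ) := Tuple.monotone_sort d
  have hsum' : ∑ i, (d ∘ σ) i = q * n + r := by
    rw [show ∑ i, (d ∘ σ) i = ∑ i, d i from Equiv.sum_comp σ d]; exact hsum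
  have hcmono : Monotone c := by
    intro a b hab
    simp only [hc]
    split_ifs with h1 h2 <;> omega
  rw [← pot_comp_perm n d σ, pot_monotone_eq n (d ∘ σ) hmono, pot_monotone_eq n c hcmono]
  refine Finset.sum_le_sum fun k _ => ?_
  calc ∑ i ∈ Iio k, (d ∘ σ) i ≤ (k : ℕ) * q + ((k : ℕ) - (n - r)) :=
        prefix_bound q r hr (d ∘ σ) hmono hsum' k
    _ = ∑ i ∈ Iio k, c i := (prefix_c q r hr k).symm
end

section
/- If G is a minimally 2-edge-connected (multi)graph and u and v are adjacent vertices of G, then the maximum number of edge-disjoint u–v paths in G is exactly 2. -/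
/-- A multigraph on vertex type `V` with edge type `E`: each edge has an unordered pair
of endvertices. -/
structure Multigraph (V : Type) (E : Type) where
  ends : E → Sym2 V

namespace Multigraph

variable {V E : Type}

/-- Walks in a multigraph. -/
inductive Walk (G : Multigraph V E) : V → V → Type
  | nil (v : V) : Walk G v v
  | cons {u v w : V} (e : E) (h : G.ends e = s(u, v)) (p : Walk G v w) : Walk G u w

namespace Walk

variable {G : Multigraph V E}

/-- The list of vertices visited by a walk. -/
def support : ∀ {u v : V}, G.Walk u v → List V
  | _, _, .nil v => [v]
  | u, _, .cons _ _ p => u :: p.support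

/-- The list of edges used by a walk. -/
def edges : ∀ {u v : V}, G.Walk u v → List E
  | _, _, .nil _ => []
  | _, _, .cons e _ p => e :: p.edges

end Walk

/-- There is a `u`–`v` walk all of whose edges lie in `B` and all of whose vertices lie in `S`. -/
def ReachableIn (G : Multigraph V E) (S : Set V) (B : Set E) (u v : V) : Prop :=
  ∃ p : G.Walk u v, (∀ e ∈ p.edges, e ∈ B) ∧ ∀ w ∈ p.support, w ∈ S

/-- The subgraph with vertex set `S` and edge set `B` is connected. -/
def ConnectedOn (G : Multigraph V E) (S : Set V) (B : Set E) : Prop :=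
  S.Nonempty ∧ ∀ u ∈ S, ∀ v ∈ S, G.ReachableIn S B u v

/-- The subgraph `(S, B)` has edge-connectivity at least `k`: removing fewer than `k`
edges of `B` never disconnects it. -/
def EdgeConnAtLeastOn (G : Multigraph V E) (S : Set V) (B : Set E) (k : ℕ) : Prop :=
  ∀ F : Finset E, ↑F ⊆ B → F.card < k →
    ∀ u ∈ S, ∀ v ∈ S, G.ReachableIn S (B \ ↑F) u v

/-- The subgraph `(S, B)` is minimally `2`-edge-connected: its edge-connectivity equals `2`
and deleting any edge decreases the edge-connectivity below `2`. -/
def MinTwoEdgeConnOn (G : Multigraph V E) (S : Set V) (B : Set E) : Prop :=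
  G.EdgeConnAtLeastOn S B 2 ∧ ¬ G.EdgeConnAtLeastOn S B 3 ∧
    ∀ e ∈ B, ¬ G.EdgeConnAtLeastOn S (B \ {e}) 2

/-- `G` is minimally `2`-edge-connected. -/
def MinTwoEdgeConn (G : Multigraph V E) : Prop :=
  G.MinTwoEdgeConnOn Set.univ Set.univ

/-- `λ_G(u,v)`: the maximum number of pairwise edge-disjoint `u`–`v` paths in `G`. -/
noncomputable def lambda (G : Multigraph V E) (u v : V) : ℕ :=
  sSup {k | ∃ p : Fin k → G.Walk u v, (∀ i, (p i).support.Nodup) ∧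
    ∀ i j, i ≠ j → ∀ e ∈ (p i).edges, e ∉ (p j).edges}

/-- `κ_G(u,v)`: the maximum number of pairwise internally disjoint `u`–`v` paths in `G`. -/
noncomputable def kappa (G : Multigraph V E) (u v : V) : ℕ :=
  sSup {k | ∃ p : Fin k → G.Walk u v, (∀ i, (p i).support.Nodup) ∧
    ∀ i j, i ≠ j →
      ((∀ w ∈ (p i).support, w ∈ (p j).support → w = u ∨ w = v) ∧
        ∀ e ∈ (p i).edges, e ∉ (p j).edges)}

open Classical in
/-- The degree of a vertex: the number of edges incident with it. -/
noncomputable def degree (G : Multigraph V E) [Fintype E] (v : V) : ℕ :=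
  (Finset.univ.filter fun e => v ∈ G.ends e).card

/-- The average edge-connectivity of `G`: the average of `λ_G(u,v)` over all unordered pairs
of distinct vertices (computed as the sum over ordered pairs divided by `n(n-1)`). -/
noncomputable def avgLambda (G : Multigraph V E) [Fintype V] [DecidableEq V] : ℚ :=
  (∑ p ∈ Finset.univ.offDiag, (G.lambda p.1 p.2 : ℚ)) /
    ((Fintype.card V : ℚ) * ((Fintype.card V : ℚ) - 1))

/-- `G` is `2`-connected: it has at least three vertices, and deleting any single vertex
leaves a connected graph. -/
def TwoConnected (G : Multigraph V E) [Fintype V] : Prop :=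
  3 ≤ Fintype.card V ∧ ∀ x u v : V, u ≠ x → v ≠ x → G.ReachableIn {x}ᶜ Set.univ u v

/-- `f` is a bridge of the spanning subgraph with edge set `B`: its removal separates
its endvertices. -/
def IsBridgeOn (G : Multigraph V E) (B : Set E) (f : E) : Prop :=
  f ∈ B ∧ ∀ x y, G.ends f = s(x, y) → ¬ G.ReachableIn Set.univ (B \ {f}) x y

/-- All endvertices of edges of `B` lie in `S`. -/
def IsSubgraphPair (G : Multigraph V E) (S : Set V) (B : Set E) : Prop :=
  ∀ e ∈ B, ∀ x, x ∈ G.ends e → x ∈ S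

/-- The subgraph `(S, B)` has no cut vertex. -/
def NoCutVertexOn (G : Multigraph V E) (S : Set V) (B : Set E) : Prop :=
  ∀ x, ∀ u ∈ S, ∀ v ∈ S, u ≠ x → v ≠ x → G.ReachableIn (S \ {x}) B u v

/-- `(S, B)` is a block of `G`: a maximal connected subgraph without a cut vertex. -/
def IsBlock (G : Multigraph V E) (S : Set V) (B : Set E) : Prop :=
  G.IsSubgraphPair S B ∧ G.ConnectedOn S B ∧ G.NoCutVertexOn S B ∧
    ∀ S' B', S ⊆ S' → B ⊆ B' → G.IsSubgraphPair S' B' → G.ConnectedOn S' B' →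
      G.NoCutVertexOn S' B' → S' = S ∧ B' = B

end Multigraph


/-!
Since `G - e` is not 2-edge-connected, some edge `g` separates two vertices of `G - e`. Then
`{e, g}` separates `u` from `v`: a `u`–`v` path avoiding `e` and `g` could replace every use of
`e` in a path of `G - g`. So every `u`–`v` path uses `e` or `g`, and there are at most two
edge-disjoint ones. Conversely, `e` itself and a `u`–`v` path of the connected graph `G - e`
are two edge-disjoint paths.
-/

namespace Multigraph

variable {V E : Type} {G : Multigraph V E}

namespace Walk

def append : ∀ {u v w : V}, G.Walk u v → G.Walk v w → G.Walk u w
  | _, _, _, .nil _, q => q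
  | _, _, _, .cons e h p, q => .cons e h (p.append q)

def reverse : ∀ {u v : V}, G.Walk u v → G.Walk v u
  | _, _, .nil v => .nil v
  | _, _, .cons e h p => p.reverse.append (.cons e (h.trans Sym2.eq_swap) (.nil _))

lemma start_mem_support {u v : V} (p : G.Walk u v) : u ∈ p.support := by
  cases p <;> simp [support]

lemma mem_support_append {u v w x : V} (p : G.Walk u v) (q : G.Walk v w) :
    x ∈ (p.append q).support ↔ x ∈ p.support ∨ x ∈ q.support := by
  induction p with
  | nil v =>
    simp only [append, support, List.mem_singleton, iff_or_self]
    rintro rfl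
    exact q.start_mem_support
  | cons e h p ih => simp [append, support, ih, or_assoc]

lemma mem_edges_append {u v w : V} (p : G.Walk u v) (q : G.Walk v w) (f : E) :
    f ∈ (p.append q).edges ↔ f ∈ p.edges ∨ f ∈ q.edges := by
  induction p with
  | nil => simp [append, edges]
  | cons e h p ih => simp [append, edges, ih, or_assoc]

lemma mem_support_reverse {u v x : V} (p : G.Walk u v) :
    x ∈ p.reverse.support ↔ x ∈ p.support := by
  induction p with
  | nil => simp [reverse]
  | cons e h p ih =>
    simp only [reverse, mem_support_append, ih, support, List.mem_cons]
    have := p.start_mem_support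
    grind

lemma mem_edges_reverse {u v : V} (p : G.Walk u v) (f : E) :
    f ∈ p.reverse.edges ↔ f ∈ p.edges := by
  induction p with
  | nil => simp [reverse]
  | cons e h p ih => simp [reverse, edges, mem_edges_append, ih, or_comm]

lemma exists_suffix_of_mem_support {a x y : V} (q : G.Walk a y) (hx : x ∈ q.support) :
    ∃ r : G.Walk x y, r.support.Sublist q.support ∧ ∀ f ∈ r.edges, f ∈ q.edges := by
  induction q with
  | nil w =>
    obtain rfl : x = w := by simpa [support] using hx
    exact ⟨.nil x, List.Sublist.refl _, fun _ => id⟩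
  | @cons a b c f hf q ih =>
    rcases List.mem_cons.mp hx with rfl | hx
    · exact ⟨.cons f hf q, List.Sublist.refl _, fun _ => id⟩
    · obtain ⟨r, hrq, hr⟩ := ih hx
      exact ⟨r, hrq.cons a, fun g hg => List.mem_cons_of_mem f (hr g hg)⟩

lemma exists_support_nodup {x y : V} (p : G.Walk x y) :
    ∃ q : G.Walk x y, q.support.Nodup ∧ ∀ f ∈ q.edges, f ∈ p.edges := by
  induction p with
  | nil w => exact ⟨.nil w, List.nodup_singleton w, fun _ => id⟩
  | @cons a b c f hf p ih =>
    obtain ⟨q, hq, hqp⟩ := ih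
    by_cases ha : a ∈ q.support
    · obtain ⟨r, hrq, hr⟩ := q.exists_suffix_of_mem_support ha
      exact ⟨r, hq.sublist hrq, fun g hg => List.mem_cons_of_mem f (hqp g (hr g hg))⟩
    · refine ⟨.cons f hf q, List.nodup_cons.mpr ⟨ha, hq⟩, fun g hg => ?_⟩
      rcases List.mem_cons.mp hg with rfl | hg
      · exact List.mem_cons_self
      · exact List.mem_cons_of_mem f (hqp g hg)

end Walk

section Reachability

variable {S : Set V} {B B' : Set E} {x y z : V}

lemma ReachableIn.mono (hB : B ⊆ B') (h : G.ReachableIn S B x y) : G.ReachableIn S B' x y :=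
  let ⟨p, hpB, hpS⟩ := h
  ⟨p, fun f hf => hB (hpB f hf), hpS⟩

lemma ReachableIn.trans (hxy : G.ReachableIn S B x y) (hyz : G.ReachableIn S B y z) :
    G.ReachableIn S B x z := by
  obtain ⟨p, hpB, hpS⟩ := hxy
  obtain ⟨q, hqB, hqS⟩ := hyz
  refine ⟨p.append q, fun f hf => ?_, fun w hw => ?_⟩
  · exact ((p.mem_edges_append q f).mp hf).elim (hpB f) (hqB f)
  · exact ((p.mem_support_append q).mp hw).elim (hpS w) (hqS w)

lemma ReachableIn.symm (h : G.ReachableIn S B x y) : G.ReachableIn S B y x :=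
  let ⟨p, hpB, hpS⟩ := h
  ⟨p.reverse, fun f hf => hpB f ((p.mem_edges_reverse f).mp hf),
    fun w hw => hpS w (p.mem_support_reverse.mp hw)⟩

lemma reachableIn_of_reachableIn_insert {e : E} {u v : V} (he : G.ends e = s(u, v))
    (huv : G.ReachableIn S B u v) (h : G.ReachableIn S (insert e B) x y) :
    G.ReachableIn S B x y := by
  obtain ⟨p, hpB, hpS⟩ := h
  induction p with
  | nil w => exact ⟨.nil w, by simp [Walk.edges], hpS⟩
  | @cons a b c f hf p ih =>
    have hab : G.ReachableIn S B a b := by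
      rcases hpB f List.mem_cons_self with rfl | hfB
      · rcases Sym2.eq_iff.mp (hf.symm.trans he) with ⟨rfl, rfl⟩ | ⟨rfl, rfl⟩
        exacts [huv, huv.symm]
      · refine ⟨.cons f hf (.nil b), fun g hg => ?_, fun w hw => hpS w ?_⟩
        · obtain rfl : g = f := by simpa [Walk.edges] using hg
          exact hfB
        · simp only [Walk.support, List.mem_cons, List.not_mem_nil, or_false] at hw ⊢
          rcases hw with rfl | rfl
          · exact Or.inl rfl
          · exact Or.inr p.start_mem_support
    exact hab.trans (ih (fun g hg => hpB g (List.mem_cons_of_mem f hg))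
      (fun w hw => hpS w (List.mem_cons_of_mem a hw)))

lemma EdgeConnAtLeastOn.reachableIn_diff_singleton {e : E} (h : G.EdgeConnAtLeastOn S B 2)
    (heB : e ∈ B) (hx : x ∈ S) (hy : y ∈ S) : G.ReachableIn S (B \ {e}) x y := by
  simpa using h {e} (by simpa using heB) (by simp) x hx y hy

end Reachability

theorem MinTwoEdgeConnOn.exists_separating_pair {S : Set V} {B : Set E} {e : E} {u v : V}
    (h : G.MinTwoEdgeConnOn S B) (heB : e ∈ B) (he : G.ends e = s(u, v)) :
    ∃ g, ¬ G.ReachableIn S (B \ {e, g}) u v := by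
  obtain ⟨h2, -, hmin⟩ := h
  have hcut := hmin e heB
  simp only [EdgeConnAtLeastOn, not_forall] at hcut
  obtain ⟨F, hFB, hF, x, hx, y, hy, hxy⟩ := hcut
  obtain ⟨g, hgB, hFg⟩ : ∃ g ∈ B, F ⊆ {g} := by
    rcases F.eq_empty_or_nonempty with rfl | ⟨g, hg⟩
    · exact ⟨e, heB, Finset.empty_subset _⟩
    · exact ⟨g, (hFB hg).1, fun f hf =>
        Finset.mem_singleton.mpr (Finset.card_le_one.mp (by omega) f hf g hg)⟩
  refine ⟨g, fun huv => hxy ?_⟩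
  have hxy' := h2.reachableIn_diff_singleton hgB hx hy
  refine (reachableIn_of_reachableIn_insert he huv (hxy'.mono ?_)).mono ?_
  · intro f ⟨hfB, hfg⟩
    by_cases hfe : f = e
    · exact Or.inl hfe
    · exact Or.inr ⟨hfB, fun hf => hf.elim hfe hfg⟩
  · intro f ⟨hfB, hf⟩
    simp only [Set.mem_insert_iff, Set.mem_singleton_iff, not_or] at hf
    exact ⟨⟨hfB, hf.1⟩, fun hfF => hf.2 (Finset.mem_singleton.mp (hFg hfF))⟩

def HasEdgeDisjointPaths (G : Multigraph V E) (u v : V) (k : ℕ) : Prop :=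
  ∃ p : Fin k → G.Walk u v, (∀ i, (p i).support.Nodup) ∧
    ∀ i j, i ≠ j → ∀ e ∈ (p i).edges, e ∉ (p j).edges

lemma lambda_eq_sSup (u v : V) : G.lambda u v = sSup {k | G.HasEdgeDisjointPaths u v k} := rfl

lemma HasEdgeDisjointPaths.le_card {u v : V} {k : ℕ} {C : Finset E}
    (hC : ∀ p : G.Walk u v, ∃ f ∈ C, f ∈ p.edges) (hk : G.HasEdgeDisjointPaths u v k) :
    k ≤ C.card := by
  obtain ⟨p, -, hdisj⟩ := hk
  choose f hfC hfp using fun i => hC (p i)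
  have hinj : Function.Injective f := fun i j hij => by
    by_contra hne
    exact hdisj i j hne _ (hfp i) (hij ▸ hfp j)
  simpa using Finset.card_le_card_of_injOn f (s := Finset.univ) (fun i _ => hfC i) hinj.injOn

lemma hasEdgeDisjointPaths_two {S : Set V} {B : Set E} {u v : V} {e : E} (huv : u ≠ v)
    (he : G.ends e = s(u, v)) (heB : e ∉ B) (h : G.ReachableIn S B u v) :
    G.HasEdgeDisjointPaths u v 2 := by
  obtain ⟨P, hPB, -⟩ := h
  obtain ⟨Q, hQ, hQP⟩ := P.exists_support_nodup
  have heQ : e ∉ Q.edges := fun heQ => heB (hPB e (hQP e heQ))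
  refine ⟨![.cons e he (.nil v), Q], fun i => ?_, fun i j hij => ?_⟩ <;> fin_cases i
  · simpa [Walk.support] using huv
  · exact hQ
  all_goals fin_cases j <;> simp [Walk.edges] at hij ⊢
  · exact heQ
  · rintro f hf rfl
    exact heQ hf

end Multigraph

theorem stmt_11_general {V E : Type} (G : Multigraph V E)
    (h : G.MinTwoEdgeConn) (u v : V) (huv : u ≠ v)
    (e : E) (he : G.ends e = s(u, v)) :
    G.lambda u v = 2 := by
  classical
  obtain ⟨g, hcut⟩ := h.exists_separating_pair (Set.mem_univ e) he
  have hmeet : ∀ p : G.Walk u v, ∃ f ∈ ({e, g} : Finset E), f ∈ p.edges := by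
    intro p
    by_contra! hp
    exact hcut ⟨p, fun f hf => ⟨trivial, fun hfeg => hp f (by simpa using hfeg) hf⟩,
      fun _ _ => trivial⟩
  have hpaths : G.HasEdgeDisjointPaths u v 2 :=
    Multigraph.hasEdgeDisjointPaths_two huv he (fun he' => he'.2 rfl)
      (h.1.reachableIn_diff_singleton trivial trivial trivial)
  rw [Multigraph.lambda_eq_sSup]
  exact IsGreatest.csSup_eq ⟨hpaths, fun k hk => (hk.le_card hmeet).trans Finset.card_le_two⟩

/-- If `G` is a minimally `2`-edge-connected multigraph and `u` and `v` are adjacent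
(distinct) vertices, then `λ_G(u,v) = 2`. -/
theorem stmt_11 {V E : Type} [Fintype V] [Fintype E] (G : Multigraph V E)
    (h : G.MinTwoEdgeConn) (u v : V) (huv : u ≠ v)
    (e : E) (he : G.ends e = s(u, v)) :
    G.lambda u v = 2 :=
  stmt_11_general G h u v huv e he
end
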